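/- Exposure-conditional identification under exclusion restriction: suppose Z is randomized (independent of (E, Y(0), Y(1), S(0), S(1))), E(z) = E for z = 0,1, exposure is necessary and sufficient for infection under control, exposure-conditional exclusion E[Y | Z=1, E=0] = E[Y | Z=0, E=0], consistency Y = Y(Z), S = S(Z). Then E[Y(1) | E=1] = (E[Y | Z=1] − E[Y | Z=0, S=0]·(1 − ρ̄_0)) / ρ̄_0, where ρ̄_0 = P(S=1 | Z=0). -/

import Mathlib

open MeasureTheory ProbabilityTheory

/-- Probability of an event as a real number. -/
noncomputable def Pr {Ω : Type*} [MeasurableSpace Ω] (μ : Measure Ω) (A : Set Ω) : ℝ :=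
  (μ A).toReal

/-- Conditional expectation of `Y` given the event `A` (as a ratio). -/
noncomputable def cexp {Ω : Type*} [MeasurableSpace Ω] (μ : Measure Ω) (Y : Ω → ℝ)
    (A : Set Ω) : ℝ :=
  (∫ ω in A, Y ω ∂μ) / Pr μ A

/-!
Randomization makes conditioning on an arm harmless for functions of `(E, S(0), S(1), Y(0), Y(1))`.
In the control arm infection and exposure coincide almost surely, so `ρ̄₀ = P(E = 1)` and the
uninfected controls are almost surely the unexposed controls; by the exclusion restriction their
mean outcome is that of the unexposed treated, i.e. `E[Y(1) | E = 0]`. As `E[Y | Z = 1] = E[Y(1)]`,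
the formula is the law of total expectation
`E[Y(1)] = E[Y(1) | E = 1] P(E = 1) + E[Y(1) | E = 0] P(E = 0)` solved for `E[Y(1) | E = 1]`.
-/

section ConditionalMean

variable {Ω : Type*} [MeasurableSpace Ω] {μ : Measure Ω}

lemma pr_congr {A B : Set Ω} (h : A =ᵐ[μ] B) : Pr μ A = Pr μ B := by
  rw [Pr, Pr, measure_congr h]

lemma cexp_congr_set {Y : Ω → ℝ} {A B : Set Ω} (h : A =ᵐ[μ] B) : cexp μ Y A = cexp μ Y B := by
  rw [cexp, cexp, setIntegral_congr_set h, pr_congr h]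

lemma cexp_congr_fun {Y Y' : Ω → ℝ} {A : Set Ω} (hA : MeasurableSet A) (h : Set.EqOn Y Y' A) :
    cexp μ Y A = cexp μ Y' A := by
  rw [cexp, cexp, setIntegral_congr_fun hA h]

lemma cexp_univ [IsProbabilityMeasure μ] (Y : Ω → ℝ) : cexp μ Y Set.univ = ∫ ω, Y ω ∂μ := by
  simp [cexp, Pr]

lemma cexp_mul_pr [IsFiniteMeasure μ] (Y : Ω → ℝ) (A : Set Ω) :
    cexp μ Y A * Pr μ A = ∫ ω in A, Y ω ∂μ := by
  rcases eq_or_ne (Pr μ A) 0 with h | h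
  · have hA : μ A = 0 := (measureReal_eq_zero_iff (measure_ne_top μ A)).1 h
    simp [h, Measure.restrict_eq_zero.2 hA]
  · exact div_mul_cancel₀ _ h

lemma integral_eq_cexp_mul_add_cexp_compl_mul [IsFiniteMeasure μ] {Y : Ω → ℝ}
    (hY : Integrable Y μ) {A : Set Ω} (hA : MeasurableSet A) :
    ∫ ω, Y ω ∂μ = cexp μ Y A * Pr μ A + cexp μ Y Aᶜ * Pr μ Aᶜ := by
  rw [cexp_mul_pr, cexp_mul_pr, integral_add_compl hA hY]

lemma integral_eq_cexp_mul_add_cexp_mul_one_sub [IsProbabilityMeasure μ] {Y E : Ω → ℝ}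
    (hY : Integrable Y μ) (hE : Measurable E) (hEbin : ∀ ω, E ω = 0 ∨ E ω = 1) :
    ∫ ω, Y ω ∂μ = cexp μ Y {ω | E ω = 1} * Pr μ {ω | E ω = 1}
      + cexp μ Y {ω | E ω = 0} * (1 - Pr μ {ω | E ω = 1}) := by
  have hE1 : MeasurableSet {ω | E ω = 1} := hE (measurableSet_singleton 1)
  have hE0 : {ω | E ω = 0} = {ω | E ω = 1}ᶜ := by
    ext ω
    have := hEbin ω
    simp only [Set.mem_ofPred_eq, Set.mem_compl_iff]
    grind
  rw [integral_eq_cexp_mul_add_cexp_compl_mul hY hE1, hE0, Pr, Pr, ← measureReal_def,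
    ← measureReal_def, probReal_compl_eq_one_sub hE1]

end ConditionalMean

namespace ProbabilityTheory.IndepFun

variable {Ω α β : Type*} [MeasurableSpace Ω] [MeasurableSpace α] [MeasurableSpace β]
  {μ : Measure Ω} {Z : Ω → α} {X : Ω → β} {A : Set α} {C : Set β}

lemma pr_preimage_inter_preimage (h : IndepFun Z X μ) (hA : MeasurableSet A)
    (hC : MeasurableSet C) : Pr μ (Z ⁻¹' A ∩ X ⁻¹' C) = Pr μ (Z ⁻¹' A) * Pr μ (X ⁻¹' C) := by
  rw [Pr, h.measure_inter_preimage_eq_mul _ _ hA hC, ENNReal.toReal_mul, Pr, Pr]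

lemma setIntegral_preimage_inter_preimage (h : IndepFun Z X μ) (hZ : Measurable Z)
    (hX : Measurable X) (hA : MeasurableSet A) (hC : MeasurableSet C) {f : β → ℝ}
    (hf : Measurable f) :
    ∫ ω in Z ⁻¹' A ∩ X ⁻¹' C, f (X ω) ∂μ = Pr μ (Z ⁻¹' A) * ∫ ω in X ⁻¹' C, f (X ω) ∂μ := by
  have hsplit := ((IndepFun_iff_Indep Z X μ).1 h).setIntegral_eq_mul hZ.comap_le
    hX.aemeasurable ⟨A, hA, rfl⟩ (hf.indicator hC).aestronglyMeasurable
  simp only [← Set.indicator_comp_right] at hsplit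
  rwa [setIntegral_indicator (hX hC), integral_indicator (hX hC)] at hsplit

lemma cexp_preimage_inter_preimage (h : IndepFun Z X μ) (hZ : Measurable Z) (hX : Measurable X)
    (hA : MeasurableSet A) (hA0 : Pr μ (Z ⁻¹' A) ≠ 0) (hC : MeasurableSet C) {f : β → ℝ}
    (hf : Measurable f) :
    cexp μ (fun ω => f (X ω)) (Z ⁻¹' A ∩ X ⁻¹' C) = cexp μ (fun ω => f (X ω)) (X ⁻¹' C) := by
  rw [cexp, cexp, h.setIntegral_preimage_inter_preimage hZ hX hA hC hf,
    h.pr_preimage_inter_preimage hA hC, mul_div_mul_left _ _ hA0]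

lemma cexp_preimage [IsProbabilityMeasure μ] (h : IndepFun Z X μ) (hZ : Measurable Z)
    (hX : Measurable X) (hA : MeasurableSet A) (hA0 : Pr μ (Z ⁻¹' A) ≠ 0) {f : β → ℝ}
    (hf : Measurable f) : cexp μ (fun ω => f (X ω)) (Z ⁻¹' A) = ∫ ω, f (X ω) ∂μ := by
  have h := h.cexp_preimage_inter_preimage hZ hX hA hA0 MeasurableSet.univ hf
  rwa [Set.preimage_univ, Set.inter_univ, cexp_univ] at h

end ProbabilityTheory.IndepFun

lemma setOf_and_eq_zero_eq_sdiff {Ω : Type*} {P : Ω → Prop} {S : Ω → ℝ}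
    (h : ∀ ω, P ω → S ω = 0 ∨ S ω = 1) :
    {ω | P ω ∧ S ω = 0} = {ω | P ω} \ {ω | S ω = 1 ∧ P ω} := by
  ext ω
  simp only [Set.mem_ofPred_eq, Set.mem_sdiff, not_and]
  constructor
  · rintro ⟨hP, hS⟩
    exact ⟨hP, fun hS1 => by norm_num [hS] at hS1⟩
  · rintro ⟨hP, hS⟩
    exact ⟨hP, (h ω hP).resolve_right fun hS1 => hS hS1 hP⟩

section BinaryEvents

variable {Ω : Type*} [MeasurableSpace Ω] {μ : Measure Ω}

lemma ae_eq_of_measure_sdiff_eq_zero_of_measure_inter_eq [IsFiniteMeasure μ] {U V : Set Ω}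
    (hsdiff : μ (U \ V) = 0) (hinter : μ (U ∩ V) = μ V) (hm : NullMeasurableSet (U ∩ V) μ) :
    U =ᵐ[μ] V := by
  have hU : U =ᵐ[μ] (U ∩ V : Set Ω) := ae_eq_set.2 ⟨by rwa [Set.sdiff_self_inter],
    by rw [Set.sdiff_eq_empty.2 Set.inter_subset_left, measure_empty]⟩
  exact hU.trans (ae_eq_of_subset_of_measure_ge Set.inter_subset_right hinter.ge hm
    (measure_ne_top μ V))

lemma setOf_eq_one_and_ae_eq_of_pr_eq [IsFiniteMeasure μ] {P : Ω → Prop} {S E : Ω → ℝ}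
    (hP : MeasurableSet {ω | P ω}) (hS : Measurable S) (hE : Measurable E)
    (hEbin : ∀ ω, P ω → E ω = 0 ∨ E ω = 1)
    (hsuff : Pr μ {ω | S ω = 1 ∧ E ω = 1 ∧ P ω} = Pr μ {ω | E ω = 1 ∧ P ω})
    (hnec : Pr μ {ω | S ω = 1 ∧ E ω = 0 ∧ P ω} = 0) :
    {ω | S ω = 1 ∧ P ω} =ᵐ[μ] {ω | E ω = 1 ∧ P ω} := by
  have hnec' := (measureReal_eq_zero_iff (measure_ne_top μ _)).1 hnec
  have hsuff' := (ENNReal.toReal_eq_toReal_iff' (measure_ne_top μ _) (measure_ne_top μ _)).1 hsuff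
  refine ae_eq_of_measure_sdiff_eq_zero_of_measure_inter_eq (measure_mono_null ?_ hnec') ?_ ?_
  · rintro ω ⟨⟨hS1, hPω⟩, hE1⟩
    exact ⟨hS1, (hEbin ω hPω).resolve_right fun h => hE1 ⟨h, hPω⟩, hPω⟩
  · rw [← hsuff']
    congr 1
    ext ω
    simp only [Set.mem_inter_iff, Set.mem_ofPred_eq]
    tauto
  · exact (((hS (measurableSet_singleton 1)).inter hP).inter
      ((hE (measurableSet_singleton 1)).inter hP)).nullMeasurableSet

lemma setOf_and_eq_zero_ae_eq {P : Ω → Prop} {S E : Ω → ℝ}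
    (hSbin : ∀ ω, P ω → S ω = 0 ∨ S ω = 1) (hEbin : ∀ ω, P ω → E ω = 0 ∨ E ω = 1)
    (h : {ω | S ω = 1 ∧ P ω} =ᵐ[μ] {ω | E ω = 1 ∧ P ω}) :
    {ω | P ω ∧ S ω = 0} =ᵐ[μ] {ω | P ω ∧ E ω = 0} := by
  rw [setOf_and_eq_zero_eq_sdiff hSbin, setOf_and_eq_zero_eq_sdiff hEbin]
  exact (ae_eq_refl _).diff h

end BinaryEvents

theorem id_exposure_conditional_ER_general
    {Ω : Type*} [MeasurableSpace Ω] (μ : Measure Ω) [IsProbabilityMeasure μ]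
    (Z E S0 S1 Y0 Y1 S Y : Ω → ℝ) (ρ0 : ℝ)
    (hZm : Measurable Z) (hEm : Measurable E)
    (hS0m : Measurable S0) (hS1m : Measurable S1)
    (hY1m : Measurable Y1)
    (hEbin : ∀ ω, E ω = 0 ∨ E ω = 1)
    (hS0 : ∀ ω, S0 ω = 0 ∨ S0 ω = 1)
    (hindep : IndepFun Z (fun ω => (E ω, S0 ω, S1 ω, Y0 ω, Y1 ω)) μ)
    (hconsS : ∀ ω, S ω = if Z ω = 1 then S1 ω else S0 ω)
    (hconsY : ∀ ω, Y ω = if Z ω = 1 then Y1 ω else Y0 ω)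
    (hint1 : Integrable Y1 μ)
    -- exposure sufficient and necessary for infection under control
    (hsuff : Pr μ {ω | S ω = 1 ∧ E ω = 1 ∧ Z ω = 0} = Pr μ {ω | E ω = 1 ∧ Z ω = 0})
    (hnec : Pr μ {ω | S ω = 1 ∧ E ω = 0 ∧ Z ω = 0} = 0)
    -- exposure-conditional exclusion restriction
    (hER : cexp μ Y {ω | Z ω = 1 ∧ E ω = 0} = cexp μ Y {ω | Z ω = 0 ∧ E ω = 0})
    (hρ0 : ρ0 = Pr μ {ω | S ω = 1 ∧ Z ω = 0} / Pr μ {ω | Z ω = 0})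
    (hpos0 : 0 < Pr μ {ω | Z ω = 0}) (hpos1 : 0 < Pr μ {ω | Z ω = 1})
    (hρ0pos : 0 < ρ0) :
    cexp μ Y1 {ω | E ω = 1}
      = (cexp μ Y {ω | Z ω = 1}
          - cexp μ Y {ω | Z ω = 0 ∧ S ω = 0} * (1 - ρ0)) / ρ0 := by
  have hZ1 : MeasurableSet {ω | Z ω = 1} := hZm (measurableSet_singleton 1)
  have hY_trt : Set.EqOn Y Y1 {ω | Z ω = 1} := fun ω hω => by simp [hconsY, hω.out]
  have hSm : Measurable S := funext hconsS ▸ hS1m.ite hZ1 hS0m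
  have hinfected : {ω | S ω = 1 ∧ Z ω = 0} =ᵐ[μ] {ω | E ω = 1 ∧ Z ω = 0} :=
    setOf_eq_one_and_ae_eq_of_pr_eq (P := fun ω => Z ω = 0) (hZm (measurableSet_singleton 0))
      hSm hEm (fun ω _ => hEbin ω) hsuff hnec
  have hspared : {ω | Z ω = 0 ∧ S ω = 0} =ᵐ[μ] {ω | Z ω = 0 ∧ E ω = 0} :=
    setOf_and_eq_zero_ae_eq (fun ω hω => by simpa [hconsS, hω] using hS0 ω)
      (fun ω _ => hEbin ω) hinfected
  have hρ : ρ0 = Pr μ {ω | E ω = 1} := by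
    have hprod : Pr μ {ω | E ω = 1 ∧ Z ω = 0} = Pr μ {ω | E ω = 1} * Pr μ {ω | Z ω = 0} :=
      (hindep.comp (φ := id) (ψ := Prod.fst) measurable_id measurable_fst).symm
        |>.pr_preimage_inter_preimage (measurableSet_singleton 1) (measurableSet_singleton 0)
    rw [hρ0, pr_congr hinfected, hprod, mul_div_cancel_right₀ _ hpos0.ne']
  have hZEY1 : IndepFun Z (fun ω => (E ω, Y1 ω)) μ :=
    hindep.comp (φ := id) (ψ := fun x : ℝ × ℝ × ℝ × ℝ × ℝ => (x.1, x.2.2.2.2)) measurable_id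
      (by fun_prop)
  have hmean_trt : cexp μ Y {ω | Z ω = 1} = ∫ ω, Y1 ω ∂μ := by
    rw [cexp_congr_fun hZ1 hY_trt]
    exact hZEY1.cexp_preimage hZm (by fun_prop) (measurableSet_singleton 1) hpos1.ne'
      measurable_snd
  have hmean_trt_unexp : cexp μ Y {ω | Z ω = 1 ∧ E ω = 0} = cexp μ Y1 {ω | E ω = 0} := by
    rw [cexp_congr_fun (A := {ω | Z ω = 1 ∧ E ω = 0})
      (hZ1.inter (hEm (measurableSet_singleton 0))) (hY_trt.mono fun _ h => h.1)]
    exact hZEY1.cexp_preimage_inter_preimage hZm (by fun_prop) (measurableSet_singleton 1)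
      hpos1.ne' (measurable_fst (measurableSet_singleton 0)) measurable_snd
  rw [hmean_trt, cexp_congr_set hspared, ← hER, hmean_trt_unexp,
    integral_eq_cexp_mul_add_cexp_mul_one_sub hint1 hEm hEbin, ← hρ, add_sub_cancel_right,
    mul_div_cancel_right₀ _ hρ0pos.ne']

/-- Exposure-conditional identification under the exposure-conditional exclusion restriction:
`E[Y(1)|E=1] = (E[Y|Z=1] − E[Y|Z=0,S=0](1−ρ̄₀))/ρ̄₀`. -/
theorem id_exposure_conditional_ER
    {Ω : Type*} [MeasurableSpace Ω] (μ : Measure Ω) [IsProbabilityMeasure μ]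
    (Z E S0 S1 Y0 Y1 S Y : Ω → ℝ) (ρ0 : ℝ)
    (hZm : Measurable Z) (hEm : Measurable E)
    (hS0m : Measurable S0) (hS1m : Measurable S1)
    (hY0m : Measurable Y0) (hY1m : Measurable Y1)
    (hZ : ∀ ω, Z ω = 0 ∨ Z ω = 1) (hEbin : ∀ ω, E ω = 0 ∨ E ω = 1)
    (hS0 : ∀ ω, S0 ω = 0 ∨ S0 ω = 1) (hS1 : ∀ ω, S1 ω = 0 ∨ S1 ω = 1)
    (hindep : IndepFun Z (fun ω => (E ω, S0 ω, S1 ω, Y0 ω, Y1 ω)) μ)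
    (hconsS : ∀ ω, S ω = if Z ω = 1 then S1 ω else S0 ω)
    (hconsY : ∀ ω, Y ω = if Z ω = 1 then Y1 ω else Y0 ω)
    (hint0 : Integrable Y0 μ) (hint1 : Integrable Y1 μ)
    -- exposure sufficient and necessary for infection under control
    (hsuff : Pr μ {ω | S ω = 1 ∧ E ω = 1 ∧ Z ω = 0} = Pr μ {ω | E ω = 1 ∧ Z ω = 0})
    (hnec : Pr μ {ω | S ω = 1 ∧ E ω = 0 ∧ Z ω = 0} = 0)
    -- exposure-conditional exclusion restriction
    (hER : cexp μ Y {ω | Z ω = 1 ∧ E ω = 0} = cexp μ Y {ω | Z ω = 0 ∧ E ω = 0})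
    (hρ0 : ρ0 = Pr μ {ω | S ω = 1 ∧ Z ω = 0} / Pr μ {ω | Z ω = 0})
    (hpos0 : 0 < Pr μ {ω | Z ω = 0}) (hpos1 : 0 < Pr μ {ω | Z ω = 1})
    (hposE : 0 < Pr μ {ω | E ω = 1}) (hEl1 : Pr μ {ω | E ω = 1} < 1)
    (hρ0pos : 0 < ρ0)
    (hpos00 : 0 < Pr μ {ω | Z ω = 0 ∧ S ω = 0})
    (hpos1E0 : 0 < Pr μ {ω | Z ω = 1 ∧ E ω = 0}) :
    cexp μ Y1 {ω | E ω = 1}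
      = (cexp μ Y {ω | Z ω = 1}
          - cexp μ Y {ω | Z ω = 0 ∧ S ω = 0} * (1 - ρ0)) / ρ0 :=
  id_exposure_conditional_ER_general μ Z E S0 S1 Y0 Y1 S Y ρ0 hZm hEm hS0m hS1m hY1m hEbin hS0
    hindep hconsS hconsY hint1 hsuff hnec hER hρ0 hpos0 hpos1 hρ0pos
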